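/- Let k ≥ 1 be an integer and ΛW(r) := 2k/(r^k + r^{−k}). Then for every u ∈ C²((0,∞)) and every r > 0, setting v(r) := u'(r) − (ΛW'(r)/ΛW(r))·u(r): −u''(r) − u'(r)/r + (k²/r²)·(1 − 8/(r^k + r^{−k})²)·u(r) = −v'(r) − v(r)/r − (ΛW'(r)/ΛW(r))·v(r). That is, the linearized operator L factorizes as L = (−∂_r − 1/r − ΛW'/ΛW)(∂_r − ΛW'/ΛW). -/

import Mathlib

/-- `ΛW(r) = r·W'(r) = 2k/(r^k + r^{−k})` for the degree-`k` harmonic map profile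
`W(r) = 2·arctan(r^k)`. -/
noncomputable def lamWmap (k : ℕ) (r : ℝ) : ℝ := 2 * k / (r ^ k + (r ^ k)⁻¹)

private lemma hasDerivAt_pow' (k : ℕ) {r : ℝ} (hr : r ≠ 0) :
    HasDerivAt (fun x : ℝ => x ^ k) ((k : ℝ) * r ^ k / r) r := by
  have h := hasDerivAt_pow k r
  convert h using 1
  · rfl
  cases k with
  | zero => simp
  | succ m =>
    push_cast
    field_simp [pow_succ]
    ring

/-- Factorization of the linearized operator of the `k`-equivariant wave map equation
at the harmonic map `W`: for `u ∈ C²((0,∞))` and `v := u' − (ΛW'/ΛW)·u`,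
`Lu = −v' − v/r − (ΛW'/ΛW)·v`, i.e. `L = (−∂_r − 1/r − ΛW'/ΛW)(∂_r − ΛW'/ΛW)`. -/
theorem stmt15 (k : ℕ) (hk : 1 ≤ k) (u : ℝ → ℝ)
    (hu : ContDiffOn ℝ 2 u (Set.Ioi 0)) (r : ℝ) (hr : 0 < r)
    (v : ℝ → ℝ)
    (hv : ∀ s : ℝ, v s = deriv u s - (deriv (lamWmap k) s / lamWmap k s) * u s) :
    -(deriv (deriv u) r) - deriv u r / r
        + ((k : ℝ) ^ 2 / r ^ 2) * (1 - 8 / (r ^ k + (r ^ k)⁻¹) ^ 2) * u r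
      = -(deriv v r) - v r / r - (deriv (lamWmap k) r / lamWmap k r) * v r := by
  have hrne : r ≠ 0 := ne_of_gt hr
  have hk0 : (k:ℝ) ≠ 0 := Nat.cast_ne_zero.mpr (by omega)
  -- explicit formula for ΛW'/ΛW on (0,∞)
  have hg : ∀ s : ℝ, 0 < s → deriv (lamWmap k) s / lamWmap k s
      = -((k:ℝ) * s ^ k / s * (1 - ((s ^ k) ^ 2)⁻¹)) / (s ^ k + (s ^ k)⁻¹) := by
    intro s hs
    have hsne : s ≠ 0 := ne_of_gt hs
    have hsk : s ^ k ≠ 0 := pow_ne_zero _ hsne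
    have hP : HasDerivAt (fun x : ℝ => x ^ k) ((k : ℝ) * s ^ k / s) s := hasDerivAt_pow' k hsne
    have hF : HasDerivAt (fun x : ℝ => x ^ k + (x ^ k)⁻¹)
        ((k:ℝ) * s ^ k / s + -((k:ℝ) * s ^ k / s) / (s ^ k) ^ 2) s := hP.add (hP.inv hsk)
    have hF0 : s ^ k + (s ^ k)⁻¹ ≠ 0 := by positivity
    have hL : HasDerivAt (lamWmap k)
        ((0 * (s ^ k + (s ^ k)⁻¹) - 2 * (k:ℝ) * ((k:ℝ) * s ^ k / s + -((k:ℝ) * s ^ k / s) / (s ^ k) ^ 2)) / (s ^ k + (s ^ k)⁻¹) ^ 2) s := by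
      unfold lamWmap
      exact (hasDerivAt_const s (2 * (k:ℝ))).div hF hF0
    rw [hL.deriv]
    unfold lamWmap
    field_simp
    ring
  -- basic nonvanishing at r
  have hrk : r ^ k ≠ 0 := pow_ne_zero _ hrne
  have hF0r : r ^ k + (r ^ k)⁻¹ ≠ 0 := by positivity
  -- derivative building blocks at r
  have hP : HasDerivAt (fun x : ℝ => x ^ k) ((k : ℝ) * r ^ k / r) r := hasDerivAt_pow' k hrne
  have hA : HasDerivAt (fun s : ℝ => (k:ℝ) * s ^ k / s)
      (((k:ℝ) * ((k:ℝ) * r ^ k / r) * r - (k:ℝ) * r ^ k * 1) / r ^ 2) r :=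
    (hP.const_mul _).div (hasDerivAt_id' r) hrne
  have hB : HasDerivAt (fun s : ℝ => (s ^ k) ^ 2)
      ((k:ℝ) * r ^ k / r * r ^ k + r ^ k * ((k:ℝ) * r ^ k / r)) r := by
    have := hP.mul hP
    simpa [sq, Pi.mul_def] using this
  have hOne : HasDerivAt (fun s : ℝ => 1 - ((s ^ k) ^ 2)⁻¹)
      (0 - -((k:ℝ) * r ^ k / r * r ^ k + r ^ k * ((k:ℝ) * r ^ k / r)) / ((r ^ k) ^ 2) ^ 2) r :=
    (hasDerivAt_const r 1).sub (hB.inv (pow_ne_zero 2 hrk))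
  have hFr : HasDerivAt (fun x : ℝ => x ^ k + (x ^ k)⁻¹)
      ((k:ℝ) * r ^ k / r + -((k:ℝ) * r ^ k / r) / (r ^ k) ^ 2) r := hP.add (hP.inv hrk)
  have hG := ((hA.mul hOne).neg).div hFr hF0r
  -- u is C² near r
  have hmem : Set.Ioi (0:ℝ) ∈ nhds r := isOpen_Ioi.mem_nhds hr
  have hu2 : HasDerivAt (deriv u) (deriv (deriv u) r) r := by
    have h1 : ContDiffOn ℝ 1 (deriv u) (Set.Ioi 0) :=
      hu.deriv_of_isOpen isOpen_Ioi (by norm_num)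
    exact (((h1.differentiableOn one_ne_zero).differentiableAt hmem).hasDerivAt)
  have hu1 : HasDerivAt u (deriv u r) r :=
    ((hu.differentiableOn two_ne_zero).differentiableAt hmem).hasDerivAt
  -- rewrite v near r
  have hvw : v =ᶠ[nhds r] (fun s : ℝ => deriv u s
      - -((k:ℝ) * s ^ k / s * (1 - ((s ^ k) ^ 2)⁻¹)) / (s ^ k + (s ^ k)⁻¹) * u s) := by
    filter_upwards [hmem] with s hs
    rw [hv s, hg s hs]
  have hw : HasDerivAt (fun s : ℝ => deriv u s
      - -((k:ℝ) * s ^ k / s * (1 - ((s ^ k) ^ 2)⁻¹)) / (s ^ k + (s ^ k)⁻¹) * u s) _ r :=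
    hu2.sub (hG.mul hu1)
  simp only [Pi.mul_apply, Pi.neg_apply, Pi.div_apply] at hw
  rw [hvw.deriv_eq, hw.deriv, hv r, hg r hr]
  field_simp
  ring
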